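/- arXiv:2302.08285 — 3 statements merged into one kernel-verified Lean document; each statement's English description precedes it below -/
import Mathlib

section
/- As n → ∞, the integral ∫_{-∞}^{∞} (sin x / x)^{2n} dx is asymptotic to √(3π/n). -/
open MeasureTheory Filter Topology Real

/-! Substituting `x = t / √n` gives `√n ∫ (sin x / x)^(2n) dx = ∫ sinc (t / √n)^(2n) dt`.
Since `sinc u = 1 - u² / 6 + O(u⁴)`, the new integrand tends to `exp (-t² / 3)`, and
`sinc² u ≤ (1 + u² / 4)⁻¹` together with Bernoulli's inequality dominates it by the integrable
`(1 + t² / 4)⁻¹`. By dominated convergence the integral tends to `∫ exp (-t² / 3) = √(3π)`. -/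

lemma abs_sinc_le_abs_cos_half (x : ℝ) : |sinc x| ≤ |cos (x / 2)| := by
  rcases eq_or_ne x 0 with rfl | hx
  · simp
  have hsin : sin x = 2 * sin (x / 2) * cos (x / 2) := by
    rw [← sin_two_mul, mul_div_cancel₀ x two_ne_zero]
  rw [sinc_of_ne_zero hx, abs_div, div_le_iff₀ (abs_pos.2 hx), hsin, abs_mul, abs_mul]
  have hsin_half : |sin (x / 2)| ≤ |x| / 2 := by simpa [abs_div] using abs_sin_le_abs (x := x / 2)
  rw [abs_two]
  nlinarith [abs_nonneg (cos (x / 2))]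

lemma sinc_sq_le_inv_one_add_sq_div_four (x : ℝ) : sinc x ^ 2 ≤ (1 + x ^ 2 / 4)⁻¹ := by
  rcases le_or_gt |x| π with hx | hx
  · obtain ⟨hl, hr⟩ := abs_le.1 hx
    have hcos_nonneg : 0 ≤ cos (x / 2) := cos_nonneg_of_mem_Icc ⟨by linarith, by linarith⟩
    have hcos : cos (x / 2) ≤ 1 / √((x / 2) ^ 2 + 1) :=
      cos_le_one_div_sqrt_sq_add_one (by linarith [pi_pos]) (by linarith [pi_pos])
    calc sinc x ^ 2 ≤ cos (x / 2) ^ 2 := sq_le_sq.2 (abs_sinc_le_abs_cos_half x)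
      _ ≤ (1 / √((x / 2) ^ 2 + 1)) ^ 2 := pow_le_pow_left₀ hcos_nonneg hcos 2
      _ = (1 + x ^ 2 / 4)⁻¹ := by
          rw [div_pow, sq_sqrt (by positivity)]
          ring
  · have hx0 : x ≠ 0 := by
      rintro rfl
      simp at hx
      linarith [pi_pos]
    have hx2 : π ^ 2 < x ^ 2 := by
      rw [← sq_abs x]
      exact pow_lt_pow_left₀ hx pi_pos.le two_ne_zero
    rw [sinc_of_ne_zero hx0, div_pow, div_le_iff₀ (by positivity), ← div_eq_inv_mul,
      le_div_iff₀ (by positivity)]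
    nlinarith [sin_sq_le_one x, pi_gt_three, sq_nonneg (sin x)]

lemma tendsto_sinc_sub_one_div_sq :
    Tendsto (fun x => (sinc x - 1) / x ^ 2) (𝓝[≠] 0) (𝓝 (-(1 / 6))) := by
  rw [← tendsto_sub_nhds_zero_iff]
  have hsq : Tendsto (fun x : ℝ => x ^ 2 / 100) (𝓝[≠] 0) (𝓝 0) :=
    tendsto_nhdsWithin_of_tendsto_nhds <| by
      simpa using ((continuous_pow 2).div_const 100).tendsto (0 : ℝ)
  refine squeeze_zero_norm' ?_ hsq
  filter_upwards [self_mem_nhdsWithin,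
    nhdsWithin_le_nhds (Metric.closedBall_mem_nhds (0 : ℝ) one_pos)] with x hx hx1
  rw [Set.mem_compl_singleton_iff] at hx
  rw [Metric.mem_closedBall, dist_zero_right, Real.norm_eq_abs] at hx1
  have key : (sinc x - 1) / x ^ 2 - -(1 / 6) = (sin x - (x - x ^ 3 / 6)) / x ^ 3 := by
    rw [sinc_of_ne_zero hx]
    field_simp
    ring
  rw [key, norm_div, norm_pow, Real.norm_eq_abs, div_le_iff₀ (by positivity)]
  calc |sin x - (x - x ^ 3 / 6)| ≤ |x| ^ 5 / 100 := sin_bound hx1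
    _ = x ^ 2 / 100 * |x| ^ 3 := by rw [← sq_abs x]; ring

lemma tendsto_sinc_sq_sub_one_div_sq :
    Tendsto (fun x => (sinc x ^ 2 - 1) / x ^ 2) (𝓝[≠] 0) (𝓝 (-(1 / 3))) := by
  have hsinc : Tendsto sinc (𝓝[≠] 0) (𝓝 1) :=
    sinc_zero ▸ continuous_sinc.continuousAt.tendsto.mono_left nhdsWithin_le_nhds
  convert tendsto_sinc_sub_one_div_sq.mul (hsinc.add_const 1) using 2 with x
  · ring
  · norm_num

lemma div_sqrt_natCast_sq (n : ℕ) (t : ℝ) : (t / √n) ^ 2 = t ^ 2 / n := by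
  rw [div_pow, sq_sqrt n.cast_nonneg]

lemma tendsto_sinc_div_sqrt_pow (t : ℝ) :
    Tendsto (fun n : ℕ => sinc (t / √n) ^ (2 * n)) atTop (𝓝 (exp (-(t ^ 2 / 3)))) := by
  refine (tendsto_one_add_pow_exp_of_tendsto (g := fun n : ℕ => sinc (t / √n) ^ 2 - 1) ?_).congr
    fun n => by rw [pow_mul, add_sub_cancel]
  rcases eq_or_ne t 0 with rfl | ht
  · simp
  have hu : Tendsto (fun n : ℕ => t / √n) atTop (𝓝[≠] 0) := by
    refine tendsto_nhdsWithin_iff.2 ⟨?_, ?_⟩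
    · exact tendsto_const_nhds.div_atTop
        (tendsto_sqrt_atTop.comp tendsto_natCast_atTop_atTop)
    · filter_upwards [eventually_ne_atTop 0] with n hn
      exact div_ne_zero ht (by positivity)
  have hlim := (tendsto_sinc_sq_sub_one_div_sq.comp hu).const_mul (t ^ 2)
  rw [mul_neg, mul_one_div] at hlim
  refine hlim.congr' ?_
  filter_upwards [eventually_ne_atTop 0] with n hn
  rw [Function.comp_apply, div_sqrt_natCast_sq]
  field_simp

lemma sinc_div_sqrt_pow_le {n : ℕ} (hn : n ≠ 0) (t : ℝ) :
    sinc (t / √n) ^ (2 * n) ≤ (1 + t ^ 2 / 4)⁻¹ := by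
  have hbernoulli : 1 + t ^ 2 / 4 ≤ (1 + (t / √n) ^ 2 / 4) ^ n := by
    have := one_add_mul_le_pow (a := (t / √n) ^ 2 / 4) (by linarith [sq_nonneg (t / √n)]) n
    rw [div_sqrt_natCast_sq] at this ⊢
    rwa [← mul_div_assoc, mul_div_cancel₀ _ (by positivity)] at this
  calc sinc (t / √n) ^ (2 * n) = (sinc (t / √n) ^ 2) ^ n := pow_mul _ _ _
    _ ≤ ((1 + (t / √n) ^ 2 / 4)⁻¹) ^ n :=
      pow_le_pow_left₀ (sq_nonneg _) (sinc_sq_le_inv_one_add_sq_div_four _) n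
    _ = ((1 + (t / √n) ^ 2 / 4) ^ n)⁻¹ := inv_pow _ _
    _ ≤ (1 + t ^ 2 / 4)⁻¹ := inv_anti₀ (by positivity) hbernoulli

lemma integrable_inv_one_add_sq_div {c : ℝ} (hc : 0 < c) :
    Integrable fun t : ℝ => (1 + t ^ 2 / c)⁻¹ := by
  refine (integrable_inv_one_add_sq.comp_div (sqrt_ne_zero'.2 hc)).congr (ae_of_all _ fun t => ?_)
  simp only [div_pow, sq_sqrt hc.le]

lemma tendsto_integral_sinc_div_sqrt_pow :
    Tendsto (fun n : ℕ => ∫ t, sinc (t / √n) ^ (2 * n)) atTop (𝓝 (√(3 * π))) := by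
  have hgauss : ∫ t : ℝ, exp (-(t ^ 2 / 3)) = √(3 * π) := by
    convert integral_gaussian 3⁻¹ using 4 with t
    · ring
    · rw [div_inv_eq_mul, mul_comm]
  rw [← hgauss]
  have hmeas (n : ℕ) : AEStronglyMeasurable fun t : ℝ => sinc (t / √n) ^ (2 * n) :=
    ((continuous_sinc.comp (continuous_id.div_const _)).pow _).aestronglyMeasurable
  refine tendsto_integral_filter_of_dominated_convergence _ (.of_forall hmeas) ?_
    (integrable_inv_one_add_sq_div four_pos) (.of_forall tendsto_sinc_div_sqrt_pow)
  filter_upwards [eventually_ne_atTop 0] with n hn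
  refine .of_forall fun t => ?_
  rw [Real.norm_of_nonneg ((even_two_mul n).pow_nonneg _)]
  exact sinc_div_sqrt_pow_le hn t

lemma integral_sinc_div_sqrt_pow (n : ℕ) :
    ∫ t, sinc (t / √n) ^ (2 * n) = √n * ∫ x, (sin x / x) ^ (2 * n) := by
  rw [Measure.integral_comp_div (fun x => sinc x ^ (2 * n)), abs_of_nonneg (sqrt_nonneg _),
    smul_eq_mul]
  congr 1
  refine integral_congr_ae ?_
  filter_upwards [Measure.ae_ne volume 0] with x hx
  rw [sinc_of_ne_zero hx]

/-- As `n → ∞`, `∫_ℝ (sin x / x)^(2n) dx ∼ √(3π/n)`. -/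
theorem sinc_pow_integral_asymptotic :
    Tendsto (fun n : ℕ => (∫ x : ℝ, (Real.sin x / x) ^ (2 * n)) / Real.sqrt (3 * Real.pi / n))
      atTop (nhds 1) := by
  have hlim := tendsto_integral_sinc_div_sqrt_pow.div_const (√(3 * π))
  rw [div_self (by positivity)] at hlim
  refine hlim.congr' ?_
  filter_upwards [eventually_ne_atTop 0] with n hn
  have hsqrt : (0 : ℝ) < √n := by positivity
  rw [integral_sinc_div_sqrt_pow, sqrt_div' _ n.cast_nonneg]
  field_simp
end

section
/- With K_n as above, the Fourier transform K̂_n satisfies 0 ≤ K̂_n(v) ≤ K̂_n(0) for all real v, and K̂_n is monotonically decreasing on [0, ∞). -/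
/-!
With `a = ε log T / n` one has `K_n(u) = a · sinc(a u)^(2n)`, and `2a · sinc(2π a ξ)` is the
Fourier transform of the indicator of `[-a, a]`. By the convolution theorem and Fourier
inversion, `K̂_n` is a positive multiple of the `2n`-fold convolution power of this indicator.
Convolving `h` with the indicator replaces it by the moving integral `v ↦ ∫_{v-a}^{v+a} h`, and
this preserves being nonnegative, even and decreasing on `[0, ∞)`: moving the window to the right
trades a piece of it for a translate further from the origin, where `h` is smaller.
-/

open MeasureTheory Set
open scoped Convolution

theorem Function.Even.apply_abs {α β : Type*} [AddGroup α] [LinearOrder α] {f : α → β}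
    (hf : f.Even) (x : α) : f |x| = f x := by
  rcases abs_choice x with hx | hx <;> simp only [hx, hf x]

namespace KernelFourier

structure IsSymmDecreasing (h : ℝ → ℝ) : Prop where
  nonneg : ∀ x, 0 ≤ h x
  even : Function.Even h
  antitoneOn : AntitoneOn h (Ici 0)

theorem IsSymmDecreasing.apply_le_apply_zero {h : ℝ → ℝ} (hh : IsSymmDecreasing h) (x : ℝ) :
    h x ≤ h 0 := by
  rw [← hh.even.apply_abs x]
  exact hh.antitoneOn self_mem_Ici (abs_nonneg x) (abs_nonneg x)

theorem IsSymmDecreasing.const_mul {h : ℝ → ℝ} (hh : IsSymmDecreasing h) {c : ℝ} (hc : 0 ≤ c) :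
    IsSymmDecreasing (fun x => c * h x) where
  nonneg x := mul_nonneg hc (hh.nonneg x)
  even x := by simp only [hh.even x]
  antitoneOn _ hx _ hy hxy := mul_le_mul_of_nonneg_left (hh.antitoneOn hx hy hxy) hc

noncomputable def box (a : ℝ) : ℝ → ℝ := indicator (Icc (-a) a) 1

theorem isSymmDecreasing_box (a : ℝ) : IsSymmDecreasing (box a) where
  nonneg x := indicator_nonneg (fun _ _ => zero_le_one) x
  even x := by
    simp only [box, indicator_apply, mem_Icc, Pi.one_apply]
    congr 1
    exact propext (by constructor <;> intro _ <;> constructor <;> linarith)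
  antitoneOn x hx y _ hxy := by
    simp only [box, indicator_apply, mem_Icc, Pi.one_apply]
    split_ifs <;> grind

theorem integrable_box (a : ℝ) : Integrable (box a) :=
  (integrable_indicator_iff measurableSet_Icc).2 (integrableOn_const (by simp))

noncomputable def movingIntegral (a : ℝ) (h : ℝ → ℝ) (v : ℝ) : ℝ := ∫ t in (v - a)..(v + a), h t

variable {a : ℝ} {h : ℝ → ℝ}

theorem convolution_box (ha : 0 ≤ a) (h : ℝ → ℝ) :
    h ⋆[ContinuousLinearMap.mul ℝ ℝ] box a = movingIntegral a h := by
  ext v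
  have hwindow : ∀ t, h t * box a (v - t) = indicator (Icc (v - a) (v + a)) h t := by
    intro t
    simp only [box, indicator_apply, mem_Icc, Pi.one_apply, mul_ite, mul_one, mul_zero]
    congr 1
    exact propext (by constructor <;> intro _ <;> constructor <;> linarith)
  simp only [convolution_def, ContinuousLinearMap.mul_apply', hwindow, movingIntegral]
  rw [integral_indicator measurableSet_Icc, integral_Icc_eq_integral_Ioc,
    intervalIntegral.integral_of_le (by linarith)]

theorem continuous_movingIntegral (hi : Integrable h) :
    Continuous (movingIntegral a h) := by
  have hprim := hi.continuous_primitive 0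
  have hdiff : movingIntegral a h =
      fun v => (∫ t in (0 : ℝ)..(v + a), h t) - ∫ t in (0 : ℝ)..(v - a), h t := by
    ext v
    exact (intervalIntegral.integral_interval_sub_left hi.intervalIntegrable
      hi.intervalIntegrable).symm
  rw [hdiff]
  exact (hprim.comp (continuous_add_const a)).sub (hprim.comp (continuous_id.sub continuous_const))

theorem movingIntegral_even (hh : Function.Even h) : Function.Even (movingIntegral a h) := by
  intro v
  calc movingIntegral a h (-v) = ∫ t in -(v + a)..-(v - a), h t := by
        simp only [movingIntegral]; congr 1 <;> ring
    _ = ∫ t in (v - a)..(v + a), h (-t) := (intervalIntegral.integral_comp_neg h).symm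
    _ = movingIntegral a h v := by simp only [hh _, movingIntegral]

theorem movingIntegral_nonneg (ha : 0 ≤ a) (hh : ∀ x, 0 ≤ h x) (v : ℝ) :
    0 ≤ movingIntegral a h v :=
  intervalIntegral.integral_nonneg (by linarith) fun t _ => hh t

theorem IsSymmDecreasing.antitoneOn_movingIntegral (hh : IsSymmDecreasing h) (hi : Integrable h)
    (ha : 0 ≤ a) : AntitoneOn (movingIntegral a h) (Ici 0) := by
  intro v hv w _ hvw
  have hii : ∀ p q : ℝ, IntervalIntegrable h volume p q := fun _ _ => hi.intervalIntegrable
  have htrade : (∫ t in (v + a)..(w + a), h t) ≤ ∫ t in (v - a)..(w - a), h t := by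
    have hshift : (∫ t in (v + a)..(w + a), h t) = ∫ t in (v - a)..(w - a), h (t + 2 * a) := by
      rw [intervalIntegral.integral_comp_add_right]
      congr 1 <;> ring
    rw [hshift]
    refine intervalIntegral.integral_mono_on (by linarith)
      (hi.comp_add_right _).intervalIntegrable (hii _ _) fun t ht => ?_
    have hle : |t| ≤ t + 2 * a := abs_le.2 ⟨by linarith [ht.1, mem_Ici.1 hv], by linarith⟩
    rw [← hh.even.apply_abs t]
    exact hh.antitoneOn (abs_nonneg t) ((abs_nonneg t).trans hle) hle
  have hv_split := intervalIntegral.integral_add_adjacent_intervals (hii (v - a) (v + a))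
    (hii (v + a) (w + a))
  have hw_split := intervalIntegral.integral_add_adjacent_intervals (hii (v - a) (w - a))
    (hii (w - a) (w + a))
  simp only [movingIntegral]
  linarith

theorem IsSymmDecreasing.movingIntegral (hh : IsSymmDecreasing h) (hi : Integrable h)
    (ha : 0 ≤ a) : IsSymmDecreasing (movingIntegral a h) where
  nonneg := movingIntegral_nonneg ha hh.nonneg
  even := movingIntegral_even hh.even
  antitoneOn := hh.antitoneOn_movingIntegral hi ha

/-- `boxConvPow a k` is the `(k + 1)`-fold convolution power of `box a`. -/
noncomputable def boxConvPow (a : ℝ) : ℕ → ℝ → ℝ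
  | 0 => box a
  | k + 1 => boxConvPow a k ⋆[ContinuousLinearMap.mul ℝ ℝ] box a

theorem integrable_boxConvPow (a : ℝ) : ∀ k, Integrable (boxConvPow a k)
  | 0 => integrable_box a
  | k + 1 => (integrable_boxConvPow a k).integrable_convolution _ (integrable_box a)

theorem boxConvPow_succ (ha : 0 ≤ a) (k : ℕ) :
    boxConvPow a (k + 1) = movingIntegral a (boxConvPow a k) :=
  convolution_box ha _

theorem isSymmDecreasing_boxConvPow (ha : 0 ≤ a) : ∀ k, IsSymmDecreasing (boxConvPow a k)
  | 0 => isSymmDecreasing_box a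
  | k + 1 => by
    rw [boxConvPow_succ ha]
    exact (isSymmDecreasing_boxConvPow ha k).movingIntegral (integrable_boxConvPow a k) ha

theorem continuous_boxConvPow_succ (ha : 0 ≤ a) (k : ℕ) : Continuous (boxConvPow a (k + 1)) := by
  rw [boxConvPow_succ ha]
  exact continuous_movingIntegral (integrable_boxConvPow a k)

open Real FourierTransform

theorem ofReal_convolution {G : Type*} [AddGroup G] [MeasurableSpace G] (μ : Measure G)
    (f g : G → ℝ) (x : G) :
    (((f ⋆[ContinuousLinearMap.mul ℝ ℝ, μ] g) x : ℝ) : ℂ) =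
      ((fun t => (f t : ℂ)) ⋆[ContinuousLinearMap.mul ℂ ℂ, μ] fun t => (g t : ℂ)) x := by
  simp only [convolution_def, ContinuousLinearMap.mul_apply', ← integral_complex_ofReal,
    Complex.ofReal_mul]

theorem two_mul_mul_sinc_eq_sin_div (a : ℝ) {w : ℝ} (hw : w ≠ 0) :
    2 * a * sinc (2 * π * a * w) = sin (2 * π * a * w) / (π * w) := by
  rcases eq_or_ne a 0 with rfl | ha
  · simp
  rw [sinc_of_ne_zero (by positivity)]
  field_simp

theorem fourier_box (ha : 0 ≤ a) (w : ℝ) :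
    𝓕 (fun x => (box a x : ℂ)) w = ((2 * a * sinc (2 * π * a * w) : ℝ) : ℂ) := by
  set c : ℂ := -2 * π * w * Complex.I
  have hintegrand : ∀ x : ℝ, Complex.exp (↑(-2 * π * x * w) * Complex.I) • (box a x : ℂ) =
      indicator (Icc (-a) a) (fun x : ℝ => Complex.exp (c * x)) x := by
    intro x
    simp only [box, indicator_apply, Pi.one_apply, c]
    split_ifs <;> simp only [Complex.ofReal_one, Complex.ofReal_zero, smul_eq_mul, mul_one,
      mul_zero]
    push_cast
    ring_nf
  rw [fourier_real_eq_integral_exp_smul, integral_congr_ae (.of_forall hintegrand),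
    integral_indicator measurableSet_Icc, integral_Icc_eq_integral_Ioc,
    ← intervalIntegral.integral_of_le (by linarith)]
  rcases eq_or_ne w 0 with rfl | hw
  · simp [c, two_mul]
  have hc : c ≠ 0 := by simp [c, hw, pi_ne_zero]
  rw [integral_exp_mul_complex hc, two_mul_mul_sinc_eq_sin_div a hw]
  push_cast
  rw [Complex.sin]
  simp only [c]
  field_simp
  ring_nf
  simp only [Complex.I_sq]
  ring_nf

theorem fourier_boxConvPow (ha : 0 ≤ a) (k : ℕ) (w : ℝ) :
    𝓕 (fun x => (boxConvPow a k x : ℂ)) w =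
      (((2 * a * sinc (2 * π * a * w)) ^ (k + 1) : ℝ) : ℂ) := by
  induction k with
  | zero => simp [boxConvPow, fourier_box ha]
  | succ k ih =>
    have hconv : (fun x => (boxConvPow a (k + 1) x : ℂ)) =
        (fun t => (boxConvPow a k t : ℂ)) ⋆[ContinuousLinearMap.mul ℂ ℂ] fun t => (box a t : ℂ) :=
      funext (ofReal_convolution volume _ _)
    have hiB : Integrable (fun t => (box a t : ℂ)) := (integrable_box a).ofReal
    have hiP : Integrable (fun t => (boxConvPow a k t : ℂ)) := (integrable_boxConvPow a k).ofReal
    rw [hconv, fourier_mul_convolution_eq hiP hiB, ih, fourier_box ha]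
    push_cast
    ring

theorem integrable_sinc_pow {N : ℕ} (hN : 2 ≤ N) : Integrable (fun x => sinc x ^ N) := by
  have hsq : ∀ x, sinc x ^ 2 * (1 + x ^ 2) ≤ 2 := by
    intro x
    have h1 : sinc x ^ 2 ≤ 1 := (sq_le_one_iff_abs_le_one _).2 (abs_sinc_le_one x)
    have h2 : sinc x ^ 2 * x ^ 2 ≤ 1 := by
      rcases eq_or_ne x 0 with rfl | hx
      · simp
      rw [sinc_of_ne_zero hx, div_pow, div_mul_cancel₀ _ (by positivity)]
      exact sin_sq_le_one x
    nlinarith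
  refine (integrable_inv_one_add_sq.const_mul 2).mono'
    (continuous_sinc.pow N).aestronglyMeasurable (Filter.Eventually.of_forall fun x => ?_)
  rw [norm_pow, norm_eq_abs, ← div_eq_mul_inv, le_div_iff₀ (by positivity)]
  calc |sinc x| ^ N * (1 + x ^ 2) ≤ |sinc x| ^ 2 * (1 + x ^ 2) := by
        have := pow_le_pow_of_le_one (abs_nonneg _) (abs_sinc_le_one x) hN
        gcongr
    _ ≤ 2 := by simpa [sq_abs] using hsq x

theorem integral_fourier_div_two_pi_mul_exp {f : ℝ → ℂ} (hf : Integrable f)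
    (h'f : Integrable (𝓕 f)) {v : ℝ} (hv : ContinuousAt f (-v)) :
    ∫ u : ℝ, 𝓕 f (u / (2 * π)) * Complex.exp (-(v * u) * Complex.I) = 2 * π * f (-v) := by
  set g : ℝ → ℂ := fun ξ => Complex.exp (↑(-2 * π * ξ * v) * Complex.I) • 𝓕 f ξ with hg
  have hrescale : ∀ u : ℝ, 𝓕 f (u / (2 * π)) * Complex.exp (-(v * u) * Complex.I) =
      g ((2 * π)⁻¹ * u) := by
    intro u
    simp only [hg, smul_eq_mul]
    rw [mul_comm, div_eq_inv_mul]
    congr 2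
    push_cast
    field_simp
  rw [integral_congr_ae (.of_forall hrescale), Measure.integral_comp_inv_mul_left g, hg,
    ← fourier_real_eq_integral_exp_smul,
    ← hf.fourierInv_fourier_eq h'f hv, fourierInv_eq_fourier_neg, neg_neg,
    abs_of_pos two_pi_pos, Complex.real_smul]
  push_cast
  ring

theorem sin_pow_div_eq_mul_sinc_pow {u : ℝ} (ha : a ≠ 0) (hu : u ≠ 0) {n : ℕ} (hn : 1 ≤ n) :
    sin (a * u) ^ (2 * n) / (a ^ (2 * n - 1) * u ^ (2 * n)) = a * sinc (a * u) ^ (2 * n) := by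
  have hpow : a ^ (2 * n) = a * a ^ (2 * n - 1) := by
    rw [← pow_succ', Nat.sub_add_cancel (by omega)]
  rw [sinc_of_ne_zero (mul_ne_zero ha hu), div_pow, mul_pow, hpow]
  field_simp

theorem integral_kernel_mul_exp (ha : 0 < a) {n : ℕ} (hn : 1 ≤ n) (v : ℝ) :
    ∫ u : ℝ, ((sin (a * u) ^ (2 * n) / (a ^ (2 * n - 1) * u ^ (2 * n)) : ℝ) : ℂ) *
        Complex.exp (-(v * u) * Complex.I) =
      ((2 * π * a / (2 * a) ^ (2 * n) * boxConvPow a (2 * n - 1) v : ℝ) : ℂ) := by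
  set G : ℝ → ℂ := fun x => (boxConvPow a (2 * n - 1) x : ℂ)
  have hFG : 𝓕 G = fun w => (((2 * a) ^ (2 * n) * sinc (2 * π * a * w) ^ (2 * n) : ℝ) : ℂ) := by
    ext w
    rw [fourier_boxConvPow ha.le, show 2 * n - 1 + 1 = 2 * n by omega, mul_pow]
  have hkernel : ∀ᵐ u : ℝ, ((sin (a * u) ^ (2 * n) / (a ^ (2 * n - 1) * u ^ (2 * n)) : ℝ) : ℂ) *
      Complex.exp (-(v * u) * Complex.I) =
      ((a / (2 * a) ^ (2 * n) : ℝ) : ℂ) *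
        (𝓕 G (u / (2 * π)) * Complex.exp (-(v * u) * Complex.I)) := by
    -- only almost everywhere: at `u = 0` the left side is `0 / 0 = 0`
    filter_upwards [Measure.ae_ne volume 0] with u hu
    rw [sin_pow_div_eq_mul_sinc_pow ha.ne' hu hn, hFG, ← mul_assoc]
    congr 1
    have ha' : (a : ℂ) ≠ 0 := by exact_mod_cast ha.ne'
    push_cast
    field_simp
  have hG : Integrable G := (integrable_boxConvPow a _).ofReal
  have hFGi : Integrable (𝓕 G) := by
    rw [hFG]
    exact (((integrable_sinc_pow (by omega)).comp_mul_left' (by positivity)).const_mul _).ofReal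
  have hGc : Continuous G := by
    obtain ⟨m, hm⟩ : ∃ m, 2 * n - 1 = m + 1 := ⟨2 * n - 2, by omega⟩
    simp only [G, hm]
    exact Complex.continuous_ofReal.comp (continuous_boxConvPow_succ ha.le m)
  rw [integral_congr_ae hkernel, integral_const_mul,
    integral_fourier_div_two_pi_mul_exp hG hFGi hGc.continuousAt]
  simp only [G, (isSymmDecreasing_boxConvPow ha.le _).even v]
  push_cast
  ring

end KernelFourier

/-- The Fourier transform of `K_n` satisfies `0 ≤ K̂_n(v) ≤ K̂_n(0)` and is decreasing
on `[0, ∞)`. -/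
theorem kernel_fourier_monotone (T ε : ℝ) (hT : 1 < T) (hε : 0 < ε) (n : ℕ) (hn : 1 ≤ n) :
    ∀ a K Khat, a = ε * Real.log T / n →
      K = (fun u : ℝ => Real.sin (a * u) ^ (2 * n) / (a ^ (2 * n - 1) * u ^ (2 * n))) →
      Khat = (fun v : ℝ => (∫ u : ℝ, (K u : ℂ) * Complex.exp (-(v * u) * Complex.I)).re) →
      (∀ v, 0 ≤ Khat v ∧ Khat v ≤ Khat 0) ∧ AntitoneOn Khat (Set.Ici 0) := by
  rintro a K Khat rfl rfl rfl
  have ha : 0 < ε * Real.log T / n := by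
    have := Real.log_pos hT
    positivity
  have hKhat := (KernelFourier.isSymmDecreasing_boxConvPow ha.le (2 * n - 1)).const_mul
    (c := 2 * Real.pi * (ε * Real.log T / n) / (2 * (ε * Real.log T / n)) ^ (2 * n))
    (by positivity)
  simp only [KernelFourier.integral_kernel_mul_exp ha hn, Complex.ofReal_re]
  exact ⟨fun v => ⟨hKhat.nonneg v, hKhat.apply_le_apply_zero v⟩, hKhat.antitoneOn⟩
end

section
/- For n ≥ 1 the integral ∫_ℝ |sin^{2n}(x)/x^{2n}| dx converges, and for c > 3 and large n, ∫_ℝ (sin x/x)^{2n} dx = ∫_{|x| ≤ c√(log n/n)} (sin x/x)^{2n} dx + O(n^{-c/3}). -/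
open MeasureTheory Filter Real

lemma aux_abs_sin_eq {x : ℝ} (hx2 : |x| ≤ π) : |Real.sin x| = Real.sin |x| := by
  rcases le_or_gt 0 x with h | h
  · rw [abs_of_nonneg h,
      abs_of_nonneg (Real.sin_nonneg_of_nonneg_of_le_pi h (by rwa [abs_of_nonneg h] at hx2))]
  · have h1 : Real.sin (-x) ≥ 0 :=
      Real.sin_nonneg_of_nonneg_of_le_pi (by linarith) (by rwa [abs_of_neg h] at hx2)
    rw [Real.sin_neg] at h1
    rw [abs_of_neg h, abs_of_nonpos (by linarith), Real.sin_neg]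

lemma aux_sinc_le_cos_half {y : ℝ} (h0 : 0 < y) (hπ : y ≤ π) :
    Real.sin y / y ≤ Real.cos (y / 2) := by
  have hs : Real.sin y = 2 * Real.sin (y / 2) * Real.cos (y / 2) := by
    rw [← Real.sin_two_mul]; ring_nf
  have hc : 0 ≤ Real.cos (y / 2) :=
    Real.cos_nonneg_of_mem_Icc ⟨by linarith [Real.pi_pos], by linarith⟩
  have hs2 : Real.sin (y / 2) ≤ y / 2 := Real.sin_le (by linarith)
  rw [div_le_iff₀ h0, hs]
  nlinarith

lemma aux_abs_sinc_le {x : ℝ} (hx : x ≠ 0) (hx2 : |x| ≤ π) :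
    |Real.sin x / x| ≤ Real.cos (|x| / 2) := by
  have h0 : 0 < |x| := abs_pos.2 hx
  rw [abs_div, aux_abs_sin_eq hx2]
  exact aux_sinc_le_cos_half h0 hx2

lemma aux_cos_le {y : ℝ} (h0 : 0 ≤ y) (h1 : y ≤ 1) : Real.cos y ≤ 1 - y ^ 2 / 3 := by
  have h := Real.cos_bound (x := y) (by rwa [abs_of_nonneg h0])
  rw [abs_of_nonneg h0] at h
  have h2 := (abs_le.1 h).2
  nlinarith [sq_nonneg y, pow_le_pow_left₀ h0 h1 2]

lemma aux_abs_sinc_le_one (x : ℝ) : |Real.sin x / x| ≤ 1 := by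
  rcases eq_or_ne x 0 with h | h
  · simp [h]
  · rw [abs_div]
    exact div_le_one_of_le₀ Real.abs_sin_le_abs (abs_nonneg x)

lemma aux_abs_sinc_le_inv (x : ℝ) : |Real.sin x / x| ≤ |x|⁻¹ := by
  rcases eq_or_ne x 0 with h | h
  · simp [h]
  · rw [abs_div, div_le_iff₀ (abs_pos.2 h), inv_mul_cancel₀ (abs_ne_zero.2 h)]
    exact Real.abs_sin_le_one x

lemma aux_pointwise (n : ℕ) (hn : 1 ≤ n) (x : ℝ) :
    (Real.sin x / x) ^ (2 * n) ≤ 2 * (1 + x ^ 2)⁻¹ := by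
  have he : Even (2 * n) := even_two_mul n
  rw [← he.pow_abs]
  rcases le_total (|x|) 1 with h | h
  · have h1 : |Real.sin x / x| ^ (2 * n) ≤ 1 :=
      pow_le_one₀ (abs_nonneg _) (aux_abs_sinc_le_one x)
    have h2 : (1 : ℝ) ≤ 2 * (1 + x ^ 2)⁻¹ := by
      rw [le_mul_inv_iff₀ (by positivity)]
      nlinarith [abs_nonneg x, sq_abs x]
    linarith
  · have hx0 : (0:ℝ) < |x| := lt_of_lt_of_le one_pos h
    have h1 : |Real.sin x / x| ^ (2 * n) ≤ (|x|⁻¹) ^ (2 * n) :=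
      pow_le_pow_left₀ (abs_nonneg _) (aux_abs_sinc_le_inv x) _
    have h2 : (|x|⁻¹) ^ (2 * n) ≤ (|x|⁻¹) ^ 2 :=
      pow_le_pow_of_le_one (by positivity) (inv_le_one_of_one_le₀ h) (by omega)
    have h3 : (|x|⁻¹) ^ 2 ≤ 2 * (1 + x ^ 2)⁻¹ := by
      have h5 : (0:ℝ) < 1 + x ^ 2 := by positivity
      rw [inv_pow, sq_abs, inv_le_iff_one_le_mul₀ (by nlinarith [sq_abs x]),
        show 2 * (1 + x ^ 2)⁻¹ * x ^ 2 = 2 * x ^ 2 / (1 + x ^ 2) by ring, le_div_iff₀ h5]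
      nlinarith [sq_abs x]
    linarith

lemma aux_integrable (n : ℕ) (hn : 1 ≤ n) :
    Integrable fun x : ℝ => (Real.sin x / x) ^ (2 * n) := by
  have hint : Integrable (fun x : ℝ => 2 * (1 + x ^ 2)⁻¹) :=
    integrable_inv_one_add_sq.const_mul 2
  refine hint.mono' ?_ ?_
  · apply Measurable.aestronglyMeasurable
    measurability
  · filter_upwards with x
    rw [Real.norm_eq_abs, abs_of_nonneg ((even_two_mul n).pow_nonneg _)]
    exact aux_pointwise n hn x

lemma aux_tail_pointwise (n : ℕ) (hn : 1 ≤ n) {x : ℝ} (hx : π ≤ |x|) :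
    (Real.sin x / x) ^ (2 * n) ≤ (π ^ (2 * n))⁻¹ * π ^ 2 * (2 * (1 + x ^ 2)⁻¹) := by
  have hπ0 : (0:ℝ) < π := Real.pi_pos
  have hπ1 : (1:ℝ) < π := by nlinarith [Real.pi_gt_three]
  have hx0 : (0:ℝ) < |x| := lt_of_lt_of_le hπ0 hx
  have hx2 : (1:ℝ) ≤ x ^ 2 := by nlinarith [sq_abs x]
  rw [← (even_two_mul n).pow_abs]
  have h1 : |Real.sin x / x| ^ (2 * n) ≤ (|x|⁻¹) ^ (2 * n) :=
    pow_le_pow_left₀ (abs_nonneg _) (aux_abs_sinc_le_inv x) _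
  have h2 : (|x|⁻¹) ^ (2 * n) = (π ^ (2 * n))⁻¹ * (π / |x|) ^ (2 * n) := by
    rw [div_pow, inv_pow]
    field_simp
  have h3 : (π / |x|) ^ (2 * n) ≤ (π / |x|) ^ 2 :=
    pow_le_pow_of_le_one (by positivity) (div_le_one_of_le₀ hx (abs_nonneg x)) (by omega)
  have h4 : (π / |x|) ^ 2 ≤ π ^ 2 * (2 * (1 + x ^ 2)⁻¹) := by
    rw [div_pow, sq_abs, div_le_iff₀ (by positivity)]
    have h5 : (0:ℝ) < 1 + x ^ 2 := by positivity
    have h6 : (1:ℝ) ≤ x ^ 2 * (2 * (1 + x ^ 2)⁻¹) := by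
      rw [show x ^ 2 * (2 * (1 + x ^ 2)⁻¹) = 2 * x ^ 2 / (1 + x ^ 2) by ring, le_div_iff₀ h5]
      nlinarith
    nlinarith [sq_nonneg π, mul_le_mul_of_nonneg_left h6 (le_of_lt (mul_pos hπ0 hπ0))]
  calc |Real.sin x / x| ^ (2 * n) ≤ (|x|⁻¹) ^ (2 * n) := h1
    _ = (π ^ (2 * n))⁻¹ * (π / |x|) ^ (2 * n) := h2
    _ ≤ (π ^ (2 * n))⁻¹ * (π / |x|) ^ 2 :=
        mul_le_mul_of_nonneg_left h3 (by positivity)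
    _ ≤ (π ^ (2 * n))⁻¹ * (π ^ 2 * (2 * (1 + x ^ 2)⁻¹)) :=
        mul_le_mul_of_nonneg_left h4 (by positivity)
    _ = _ := by ring

lemma aux_mid_pointwise (n : ℕ) {r x : ℝ} (hr0 : 0 < r) (hrπ : r ≤ π)
    (hx : r ≤ |x|) (hxπ : |x| ≤ π) :
    (Real.sin x / x) ^ (2 * n) ≤ Real.cos (r / 2) ^ (2 * n) := by
  have hx0 : x ≠ 0 := by
    intro h; rw [h, abs_zero] at hx; linarith
  have h1 : |Real.sin x / x| ≤ Real.cos (|x| / 2) := aux_abs_sinc_le hx0 hxπ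
  have h2 : Real.cos (|x| / 2) ≤ Real.cos (r / 2) :=
    Real.cos_le_cos_of_nonneg_of_le_pi (by linarith) (by linarith [Real.pi_pos]) (by linarith)
  rw [← (even_two_mul n).pow_abs]
  exact pow_le_pow_left₀ (abs_nonneg _) (h1.trans h2) _

lemma aux_union_le {f : ℝ → ℝ} (hfi : Integrable f) (hfnn : ∀ x, 0 ≤ f x)
    {A B : Set ℝ} (hA : MeasurableSet A) (hB : MeasurableSet B) :
    ∫ x in A ∪ B, f x ≤ (∫ x in A, f x) + ∫ x in B, f x := by
  rw [← Set.union_diff_self,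
    setIntegral_union Set.disjoint_sdiff_right (hB.diff hA) hfi.integrableOn hfi.integrableOn]
  gcongr
  · exact Eventually.of_forall hfnn
  · exact hfi.integrableOn
  · exact Set.diff_subset

set_option maxHeartbeats 1000000 in
/-- `∫_ℝ (sin x / x)^(2n) dx` converges for `n ≥ 1`, and for `c > 3` one has
`∫_ℝ (sin x/x)^(2n) dx = ∫_{|x| ≤ c√(log n/n)} (sin x/x)^(2n) dx + O(n^(-c/3))`. -/
theorem sinc_pow_integral_localization :
    (∀ n : ℕ, 1 ≤ n → Integrable fun x : ℝ => Real.sin x ^ (2 * n) / x ^ (2 * n)) ∧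
    ∀ c : ℝ, 3 < c →
      (fun n : ℕ => (∫ x : ℝ, (Real.sin x / x) ^ (2 * n)) -
          ∫ x in Set.Icc (-(c * Real.sqrt (Real.log n / n))) (c * Real.sqrt (Real.log n / n)),
            (Real.sin x / x) ^ (2 * n))
        =O[atTop] fun n : ℕ => (n : ℝ) ^ (-c / 3) := by
  constructor
  · intro n hn
    simpa [div_pow] using aux_integrable n hn
  intro c hc
  have hπ0 : (0:ℝ) < π := Real.pi_pos
  have hπ3 : (3:ℝ) < π := Real.pi_gt_three
  have hc0 : (0:ℝ) < c := by linarith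
  rw [Asymptotics.isBigO_iff]
  refine ⟨2 * π + 4 * π ^ 3, ?_⟩
  have hev2 : ∀ᶠ n : ℕ in atTop, c * Real.sqrt (Real.log n / n) ≤ 2 := by
    have h1 : Tendsto (fun x : ℝ => Real.log x / x) atTop (nhds 0) :=
      Real.isLittleO_log_id_atTop.tendsto_div_nhds_zero
    have h2 : Tendsto (fun n : ℕ => Real.log n / n) atTop (nhds 0) :=
      h1.comp tendsto_natCast_atTop_atTop
    have h3 : Tendsto (fun n : ℕ => c * Real.sqrt (Real.log n / n)) atTop (nhds 0) := by
      have h4 := (Real.continuous_sqrt.tendsto' 0 0 (by simp)).comp h2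
      have h5 := h4.const_mul c
      simpa using h5
    exact (h3.eventually (gt_mem_nhds (by norm_num : (0:ℝ) < 2))).mono fun n h => h.le
  have hev3 : ∀ᶠ n : ℕ in atTop, ((π:ℝ) ^ (2 * n))⁻¹ ≤ (n:ℝ) ^ (-c / 3) := by
    set k := ⌈c / 3⌉₊ with hk
    have hlt : ‖((π:ℝ) ^ 2)⁻¹‖ < 1 := by
      rw [norm_inv, norm_pow, Real.norm_eq_abs, abs_of_pos hπ0]
      exact inv_lt_one_of_one_lt₀ (by nlinarith)
    have h1 : Tendsto (fun n : ℕ => (n:ℝ) ^ k * (((π:ℝ) ^ 2)⁻¹) ^ n) atTop (nhds 0) :=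
      (summable_pow_mul_geometric_of_norm_lt_one k hlt).tendsto_atTop_zero
    have h2 : ∀ᶠ n : ℕ in atTop, (n:ℝ) ^ k * (((π:ℝ) ^ 2)⁻¹) ^ n < 1 :=
      h1.eventually (gt_mem_nhds one_pos)
    filter_upwards [h2, eventually_ge_atTop 1] with n hlt1 hn1
    have hn1' : (1:ℝ) ≤ (n:ℝ) := by exact_mod_cast hn1
    have hkpos : (0:ℝ) < (n:ℝ) ^ k := by positivity
    have h3 : (((π:ℝ) ^ 2)⁻¹) ^ n ≤ ((n:ℝ) ^ k)⁻¹ := by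
      rw [inv_eq_one_div ((n:ℝ) ^ k), le_div_iff₀ hkpos]
      nlinarith [hlt1]
    have h4 : (((π:ℝ) ^ 2)⁻¹) ^ n = ((π:ℝ) ^ (2 * n))⁻¹ := by
      rw [inv_pow, ← pow_mul]
    have h5 : ((n:ℝ) ^ k)⁻¹ = (n:ℝ) ^ (-(k:ℝ)) := by
      rw [Real.rpow_neg (by positivity), Real.rpow_natCast]
    have h6 : (n:ℝ) ^ (-(k:ℝ)) ≤ (n:ℝ) ^ (-c / 3) := by
      refine Real.rpow_le_rpow_of_exponent_le hn1' ?_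
      have := Nat.le_ceil (c / 3)
      rw [← hk] at this
      linarith
    calc ((π:ℝ) ^ (2 * n))⁻¹ = (((π:ℝ) ^ 2)⁻¹) ^ n := h4.symm
      _ ≤ ((n:ℝ) ^ k)⁻¹ := h3
      _ = (n:ℝ) ^ (-(k:ℝ)) := h5
      _ ≤ (n:ℝ) ^ (-c / 3) := h6
  filter_upwards [eventually_ge_atTop 2, hev2, hev3] with n hn2 hr2 hπn
  set r := c * Real.sqrt (Real.log n / n) with hrdef
  have hn1 : (1:ℝ) < (n:ℝ) := by exact_mod_cast (by omega : 1 < n)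
  have hnpos : (0:ℝ) < (n:ℝ) := by linarith
  have hn1' : (1:ℝ) ≤ (n:ℝ) := hn1.le
  have hlog : 0 < Real.log n := Real.log_pos hn1
  have hlogn : 0 < Real.log n / n := div_pos hlog hnpos
  have hr0 : 0 < r := mul_pos hc0 (Real.sqrt_pos.2 hlogn)
  have hrπ : r ≤ π := le_trans hr2 (by linarith)
  set f := fun x : ℝ => (Real.sin x / x) ^ (2 * n) with hf
  have hfnn : ∀ x, 0 ≤ f x := fun x => (even_two_mul n).pow_nonneg _
  have hone : 1 ≤ n := by omega
  have hfi : Integrable f := aux_integrable n hone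
  have key : ((∫ x, f x) - ∫ x in Set.Icc (-r) r, f x) = ∫ x in (Set.Icc (-r) r)ᶜ, f x := by
    rw [← integral_add_compl measurableSet_Icc hfi]
    ring
  set M := Real.cos (r / 2) ^ (2 * n) with hM
  set K := ((π:ℝ) ^ (2 * n))⁻¹ * π ^ 2 with hK
  have hKnn : 0 ≤ K := by positivity
  have hMnn : 0 ≤ M := by
    refine pow_nonneg (Real.cos_nonneg_of_mem_Icc ⟨by linarith, by linarith⟩) _
  have hgint : Integrable (fun x : ℝ => K * (2 * (1 + x ^ 2)⁻¹)) :=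
    (integrable_inv_one_add_sq.const_mul 2).const_mul K
  -- the subset
  have hsub : (Set.Icc (-r) r)ᶜ ⊆
      (Set.Icc (-π) (-r) ∪ Set.Icc r π) ∪ (Set.Iic (-π) ∪ Set.Ici π) := by
    intro x hx
    simp only [Set.mem_compl_iff, Set.mem_Icc, not_and_or, not_le] at hx
    simp only [Set.mem_union, Set.mem_Icc, Set.mem_Iic, Set.mem_Ici]
    rcases hx with h | h
    · rcases le_total (-π) x with h' | h'
      · exact Or.inl (Or.inl ⟨h', h.le⟩)
      · exact Or.inr (Or.inl h')
    · rcases le_total x π with h' | h'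
      · exact Or.inl (Or.inr ⟨h.le, h'⟩)
      · exact Or.inr (Or.inr h')
  have hmono1 : ∫ x in (Set.Icc (-r) r)ᶜ, f x ≤
      ∫ x in (Set.Icc (-π) (-r) ∪ Set.Icc r π) ∪ (Set.Iic (-π) ∪ Set.Ici π), f x :=
    setIntegral_mono_set hfi.integrableOn (Eventually.of_forall hfnn)
      (HasSubset.Subset.eventuallyLE hsub)
  have hmono2 : ∫ x in (Set.Icc (-π) (-r) ∪ Set.Icc r π) ∪ (Set.Iic (-π) ∪ Set.Ici π), f x ≤
      ((∫ x in Set.Icc (-π) (-r), f x) + ∫ x in Set.Icc r π, f x) +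
        ((∫ x in Set.Iic (-π), f x) + ∫ x in Set.Ici π, f x) := by
    refine le_trans (aux_union_le hfi hfnn (measurableSet_Icc.union measurableSet_Icc)
      (measurableSet_Iic.union measurableSet_Ici)) ?_
    gcongr
    · exact aux_union_le hfi hfnn measurableSet_Icc measurableSet_Icc
    · exact aux_union_le hfi hfnn measurableSet_Iic measurableSet_Ici
  -- middle pieces
  have hmidR : ∫ x in Set.Icc r π, f x ≤ (π - r) * M := by
    have h1 : ∫ x in Set.Icc r π, f x ≤ ∫ _ in Set.Icc r π, M :=
      setIntegral_mono_on hfi.integrableOn (integrableOn_const measure_Icc_lt_top.ne)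
        measurableSet_Icc (fun x hx => by
          refine aux_mid_pointwise n hr0 hrπ ?_ ?_
          · rw [abs_of_pos (lt_of_lt_of_le hr0 hx.1)]; exact hx.1
          · rw [abs_of_pos (lt_of_lt_of_le hr0 hx.1)]; exact hx.2)
    rwa [setIntegral_const, measureReal_def, Real.volume_Icc, ENNReal.toReal_ofReal (by linarith),
      smul_eq_mul] at h1
  have hmidL : ∫ x in Set.Icc (-π) (-r), f x ≤ (π - r) * M := by
    have h1 : ∫ x in Set.Icc (-π) (-r), f x ≤ ∫ _ in Set.Icc (-π) (-r), M :=
      setIntegral_mono_on hfi.integrableOn (integrableOn_const measure_Icc_lt_top.ne)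
        measurableSet_Icc (fun x hx => by
          have hx1 : x < 0 := lt_of_le_of_lt hx.2 (by linarith)
          refine aux_mid_pointwise n hr0 hrπ ?_ ?_
          · rw [abs_of_neg hx1]; linarith [hx.2]
          · rw [abs_of_neg hx1]; linarith [hx.1])
    rwa [setIntegral_const, measureReal_def, Real.volume_Icc, ENNReal.toReal_ofReal (by linarith),
      smul_eq_mul, show -r - -π = π - r by ring] at h1
  -- tail pieces
  have htailR : ∫ x in Set.Ici π, f x ≤ K * (2 * π) := by
    have h1 : ∫ x in Set.Ici π, f x ≤ ∫ x in Set.Ici π, K * (2 * (1 + x ^ 2)⁻¹) := by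
      refine setIntegral_mono_on hfi.integrableOn hgint.integrableOn measurableSet_Ici
        (fun x hx => ?_)
      have : π ≤ |x| := le_trans hx (le_abs_self x)
      simpa [hK, mul_assoc] using aux_tail_pointwise n hone this
    have h2 : ∫ x in Set.Ici π, K * (2 * (1 + x ^ 2)⁻¹) ≤ ∫ x, K * (2 * (1 + x ^ 2)⁻¹) :=
      setIntegral_le_integral hgint (Eventually.of_forall fun x => by positivity)
    have h3 : (∫ x : ℝ, K * (2 * (1 + x ^ 2)⁻¹)) = K * (2 * π) := by
      rw [integral_const_mul]
      congr 1
      rw [integral_const_mul, integral_univ_inv_one_add_sq]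
    linarith
  have htailL : ∫ x in Set.Iic (-π), f x ≤ K * (2 * π) := by
    have h1 : ∫ x in Set.Iic (-π), f x ≤ ∫ x in Set.Iic (-π), K * (2 * (1 + x ^ 2)⁻¹) := by
      refine setIntegral_mono_on hfi.integrableOn hgint.integrableOn measurableSet_Iic
        (fun x hx => ?_)
      have hx' : x ≤ -π := hx
      have : π ≤ |x| := by
        rw [abs_of_nonpos (by linarith : x ≤ 0)]; linarith
      simpa [hK, mul_assoc] using aux_tail_pointwise n hone this
    have h2 : ∫ x in Set.Iic (-π), K * (2 * (1 + x ^ 2)⁻¹) ≤ ∫ x, K * (2 * (1 + x ^ 2)⁻¹) :=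
      setIntegral_le_integral hgint (Eventually.of_forall fun x => by positivity)
    have h3 : (∫ x : ℝ, K * (2 * (1 + x ^ 2)⁻¹)) = K * (2 * π) := by
      rw [integral_const_mul]
      congr 1
      rw [integral_const_mul, integral_univ_inv_one_add_sq]
    linarith
  -- bound on M
  have hMle : M ≤ (n:ℝ) ^ (-c / 3) := by
    have h1 : Real.cos (r / 2) ≤ 1 - (r / 2) ^ 2 / 3 :=
      aux_cos_le (by linarith) (by linarith)
    have h2 : (1:ℝ) - (r / 2) ^ 2 / 3 ≤ Real.exp (-((r / 2) ^ 2 / 3)) := by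
      have := Real.add_one_le_exp (-((r / 2) ^ 2 / 3))
      linarith
    have hcosnn : 0 ≤ Real.cos (r / 2) :=
      Real.cos_nonneg_of_mem_Icc ⟨by linarith, by linarith⟩
    have h3 : M ≤ Real.exp (-((r / 2) ^ 2 / 3)) ^ (2 * n) :=
      pow_le_pow_left₀ hcosnn (h1.trans h2) _
    have h4 : Real.exp (-((r / 2) ^ 2 / 3)) ^ (2 * n) = Real.exp (((2 * n : ℕ) : ℝ) * (-((r / 2) ^ 2 / 3))) := by
      rw [Real.exp_nat_mul]
    have hr2eq : r ^ 2 = c ^ 2 * (Real.log n / n) := by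
      rw [hrdef, mul_pow, Real.sq_sqrt hlogn.le]
    have h5 : ((2 * n : ℕ) : ℝ) * (-((r / 2) ^ 2 / 3)) = Real.log n * (-(c ^ 2) / 6) := by
      push_cast
      rw [show -((r / 2) ^ 2 / 3) = -(r ^ 2) / 12 by ring, hr2eq]
      field_simp
      ring
    have h6 : Real.exp (Real.log n * (-(c ^ 2) / 6)) = (n:ℝ) ^ (-(c ^ 2) / 6 : ℝ) := by
      rw [Real.rpow_def_of_pos hnpos]
    have h7 : (n:ℝ) ^ (-(c ^ 2) / 6 : ℝ) ≤ (n:ℝ) ^ (-c / 3) :=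
      Real.rpow_le_rpow_of_exponent_le hn1' (by nlinarith)
    calc M ≤ Real.exp (-((r / 2) ^ 2 / 3)) ^ (2 * n) := h3
      _ = (n:ℝ) ^ (-(c ^ 2) / 6 : ℝ) := by rw [h4, h5, h6]
      _ ≤ (n:ℝ) ^ (-c / 3) := h7
  -- assemble
  have hKle : K * (2 * π) ≤ 2 * π ^ 3 * (n:ℝ) ^ (-c / 3) := by
    have heq : K * (2 * π) = 2 * π ^ 3 * ((π:ℝ) ^ (2 * n))⁻¹ := by rw [hK]; ring
    rw [heq]
    exact mul_le_mul_of_nonneg_left hπn (by positivity)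
  have hdiffnn : 0 ≤ ∫ x in (Set.Icc (-r) r)ᶜ, f x :=
    setIntegral_nonneg measurableSet_Icc.compl fun x _ => hfnn x
  have hrnn : (0:ℝ) ≤ (n:ℝ) ^ (-c / 3) := Real.rpow_nonneg hnpos.le _
  rw [Real.norm_eq_abs, Real.norm_eq_abs, key, abs_of_nonneg hdiffnn, abs_of_nonneg hrnn]
  have h8 : (π - r) * M ≤ π * ((n:ℝ) ^ (-c / 3)) := by
    calc (π - r) * M ≤ π * M := mul_le_mul_of_nonneg_right (by linarith) hMnn
      _ ≤ π * ((n:ℝ) ^ (-c / 3)) := mul_le_mul_of_nonneg_left hMle hπ0.le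
  linarith [hKle, hmono1, hmono2, hmidR, hmidL, htailR, htailL, h8]
end
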